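/- For every positive integer D, the set of SL₂(ℤ)-equivalence classes of positive definite integral binary quadratic forms of discriminant −D is finite. -/
import Mathlib


/-- An integral binary quadratic form `a x² + b x y + c y²`. -/
structure BQF where
  a : ℤ
  b : ℤ
  c : ℤ

namespace BQF

/-- Evaluation of a binary quadratic form. -/
def eval (f : BQF) (x y : ℤ) : ℤ := f.a * x ^ 2 + f.b * x * y + f.c * y ^ 2

/-- The discriminant `b² − 4ac`. -/
def disc (f : BQF) : ℤ := f.b ^ 2 - 4 * f.a * f.c

/-- Positive definiteness: `a > 0` and negative discriminant. -/
def IsPosDef (f : BQF) : Prop := 0 < f.a ∧ f.disc < 0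

/-- The action of `γ = (α β; γ δ) ∈ SL₂(ℤ)` by linear substitution of variables:
`(f·γ)(x, y) = f(αx + βy, γx + δy)`. -/
def act (f : BQF) (γ : Matrix.SpecialLinearGroup (Fin 2) ℤ) : BQF where
  a := f.eval (γ 0 0) (γ 1 0)
  b := 2 * f.a * (γ 0 0) * (γ 0 1) + f.b * ((γ 0 0) * (γ 1 1) + (γ 0 1) * (γ 1 0)) +
    2 * f.c * (γ 1 0) * (γ 1 1)
  c := f.eval (γ 0 1) (γ 1 1)

end BQF

abbrev SL2 := Matrix.SpecialLinearGroup (Fin 2) ℤ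

lemma BQF.ext' (f g : BQF) (h1 : f.a = g.a) (h2 : f.b = g.b) (h3 : f.c = g.c) : f = g := by
  cases f; cases g; simp_all

lemma sl2_det (γ : SL2) : γ 0 0 * γ 1 1 - γ 0 1 * γ 1 0 = 1 := by
  have := γ.prop
  rwa [Matrix.det_fin_two] at this

lemma BQF.act_mul (f : BQF) (γ δ : SL2) : f.act (γ * δ) = (f.act γ).act δ := by
  apply BQF.ext' <;>
  · simp only [BQF.act, BQF.eval, Matrix.SpecialLinearGroup.coe_mul, Matrix.mul_apply,
      Fin.sum_univ_two]
    ring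

lemma BQF.disc_act (f : BQF) (γ : SL2) : (f.act γ).disc = f.disc := by
  have h := sl2_det γ
  simp only [BQF.act, BQF.eval, BQF.disc]
  linear_combination ((γ 0 0 * γ 1 1 - γ 0 1 * γ 1 0 + 1) * (f.b ^ 2 - 4 * f.a * f.c)) * h

lemma BQF.eval_pos (f : BQF) (hf : f.IsPosDef) (x y : ℤ) (h : ¬(x = 0 ∧ y = 0)) :
    0 < f.eval x y := by
  obtain ⟨ha, hd⟩ := hf
  have key : 4 * f.a * f.eval x y = (2 * f.a * x + f.b * y) ^ 2 - f.disc * y ^ 2 := by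
    simp only [BQF.eval, BQF.disc]; ring
  rcases eq_or_ne y 0 with hy | hy
  · have hx : x ≠ 0 := by tauto
    have : 0 < x ^ 2 := by positivity
    have : f.eval x y = f.a * x ^ 2 := by simp [BQF.eval, hy]
    nlinarith
  · have hy2 : 0 < y ^ 2 := by positivity
    nlinarith [sq_nonneg (2 * f.a * x + f.b * y)]

lemma BQF.act_posDef (f : BQF) (hf : f.IsPosDef) (γ : SL2) : (f.act γ).IsPosDef := by
  constructor
  · show 0 < f.eval (γ 0 0) (γ 1 0)
    apply f.eval_pos hf
    rintro ⟨h1, h2⟩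
    have := sl2_det γ
    rw [h1, h2] at this
    simp at this
  · rw [BQF.disc_act]; exact hf.2


/-- The positive definite integral binary quadratic forms of discriminant `−D`. -/
def Form (D : ℕ) := {f : BQF // f.IsPosDef ∧ f.disc = -(D : ℤ)}

/-- `SL₂(ℤ)`-equivalence of forms of discriminant `−D`. -/
def ClassRel (D : ℕ) : Form D → Form D → Prop :=
  fun f g => ∃ γ : Matrix.SpecialLinearGroup (Fin 2) ℤ, g.1 = f.1.act γ

/-- The set of `SL₂(ℤ)`-equivalence classes of positive definite forms of
discriminant `−D`. -/
def ClassSet (D : ℕ) := Quot (ClassRel D)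

def Form.act {D : ℕ} (f : Form D) (γ : SL2) : Form D :=
  ⟨f.1.act γ, BQF.act_posDef f.1 f.2.1 γ, by rw [BQF.disc_act]; exact f.2.2⟩

def Tm (n : ℤ) : SL2 := ⟨!![1, n; 0, 1], by simp [Matrix.det_fin_two_of]⟩
def Sm : SL2 := ⟨!![0, -1; 1, 0], by simp [Matrix.det_fin_two_of]⟩

def Reduced (f : BQF) : Prop := |f.b| ≤ f.a ∧ f.a ≤ f.c

lemma act_Tm (f : BQF) (n : ℤ) :
    (f.act (Tm n)).a = f.a ∧ (f.act (Tm n)).b = f.b + 2 * f.a * n := by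
  constructor
  · simp [BQF.act, BQF.eval, Tm]
  · simp [BQF.act, BQF.eval, Tm]; ring

lemma act_Sm (f : BQF) : (f.act Sm).a = f.c ∧ (f.act Sm).b = -f.b := by
  constructor <;> · simp [BQF.act, BQF.eval, Sm]

lemma c_pos {D : ℕ} (f : Form D) (hD : 0 < D) : 0 < f.1.c := by
  obtain ⟨⟨ha, _⟩, hd⟩ := f.2
  have hb : 0 ≤ f.1.b ^ 2 := sq_nonneg _
  have : f.1.b ^ 2 - 4 * f.1.a * f.1.c = -(D : ℤ) := hd
  have hDpos : (0 : ℤ) < D := by exact_mod_cast hD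
  nlinarith

/-- Every form is equivalent to a reduced one. -/
lemma exists_reduced {D : ℕ} (hD : 0 < D) (f : Form D) :
    ∃ g : Form D, Reduced g.1 ∧ ∃ γ : SL2, g.1 = f.1.act γ := by
  obtain ⟨k, hk⟩ : ∃ k : ℕ, f.1.a.toNat = k := ⟨_, rfl⟩
  induction k using Nat.strong_induction_on generalizing f with
  | _ k ih =>
    subst hk
    -- translate to make |b| ≤ a
    set a := f.1.a with ha_def
    have ha : 0 < a := f.2.1.1
    set n : ℤ := -((f.1.b + a) / (2 * a)) with hn_def
    set f' : Form D := f.act (Tm n) with hf'_def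
    have h2a : 0 < 2 * a := by linarith
    have hb' : f'.1.b = (f.1.b + a) % (2 * a) - a := by
      have hT : f'.1.b = f.1.b + 2 * f.1.a * n := (act_Tm f.1 n).2
      have hmod : (f.1.b + a) % (2 * a) + 2 * a * ((f.1.b + a) / (2 * a)) = f.1.b + a :=
        Int.emod_add_mul_ediv _ _
      rw [hT, hn_def, ← ha_def]
      linear_combination -hmod
    have ha' : f'.1.a = a := (act_Tm f.1 n).1
    have hb'bound : |f'.1.b| ≤ a := by
      have h1 : 0 ≤ (f.1.b + a) % (2 * a) := Int.emod_nonneg _ (by linarith)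
      have h2 : (f.1.b + a) % (2 * a) < 2 * a := Int.emod_lt_of_pos _ h2a
      rw [hb', abs_le]; constructor <;> linarith
    by_cases hc : a ≤ f'.1.c
    · exact ⟨f', ⟨by rwa [ha'], by rwa [ha']⟩, Tm n, rfl⟩
    · push_neg at hc
      set f'' : Form D := f'.act Sm with hf''_def
      have ha'' : f''.1.a = f'.1.c := (act_Sm f'.1).1
      have hc'pos : 0 < f'.1.c := c_pos f' hD
      have hlt : f''.1.a.toNat < f.1.a.toNat := by
        omega
      obtain ⟨g, hgred, γ, hγ⟩ := ih _ hlt f'' rfl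
      refine ⟨g, hgred, Tm n * Sm * γ, ?_⟩
      rw [hγ, BQF.act_mul, BQF.act_mul]
      rfl

/-- For every positive integer `D`, there are only finitely many `SL₂(ℤ)`-equivalence
classes of positive definite integral binary quadratic forms of discriminant `−D`. -/
theorem finite_classSet (D : ℕ) (hD : 0 < D) : Finite (ClassSet D) := by
  -- reduced forms embed into a finite set via (a, b)
  set R := {g : Form D // Reduced g.1} with hR
  have hfinR : Finite R := by
    have hinj : Function.Injective (fun g : R =>
        ((⟨g.1.1.a, by
            obtain ⟨⟨ha, _⟩, hd⟩ := g.1.2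
            rw [BQF.disc] at hd
            obtain ⟨hab, hac⟩ := g.2
            have hb2 : g.1.1.b ^ 2 ≤ g.1.1.a ^ 2 := by
              have := abs_le.mp hab
              nlinarith [abs_nonneg g.1.1.b, sq_abs g.1.1.b]
            have hDpos : (0:ℤ) < D := by exact_mod_cast hD
            simp only [Finset.mem_Icc]
            constructor
            · linarith
            · nlinarith⟩ : Finset.Icc (1:ℤ) (D:ℤ)),
         (⟨g.1.1.b, by
            obtain ⟨⟨ha, _⟩, hd⟩ := g.1.2
            rw [BQF.disc] at hd
            obtain ⟨hab, hac⟩ := g.2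
            have hb2 : g.1.1.b ^ 2 ≤ g.1.1.a ^ 2 := by
              have := abs_le.mp hab
              nlinarith [abs_nonneg g.1.1.b, sq_abs g.1.1.b]
            have hDpos : (0:ℤ) < D := by exact_mod_cast hD
            have h1 : g.1.1.a ≤ (D:ℤ) := by nlinarith
            have := abs_le.mp hab
            simp only [Finset.mem_Icc]
            constructor <;> linarith⟩ : Finset.Icc (-(D:ℤ)) (D:ℤ)))) := by
      rintro ⟨⟨f, hf⟩, hfr⟩ ⟨⟨g, hg⟩, hgr⟩ h
      simp only [Prod.mk.injEq, Subtype.mk.injEq] at h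
      obtain ⟨hab, hbb⟩ := h
      have ha : 0 < f.a := hf.1.1
      have hcc : f.c = g.c := by
        have h1 : f.b ^ 2 - 4 * f.a * f.c = -(D:ℤ) := hf.2
        have h2 : g.b ^ 2 - 4 * g.a * g.c = -(D:ℤ) := hg.2
        rw [← hab, ← hbb] at h2
        have : 4 * f.a * f.c = 4 * f.a * g.c := by linarith
        have h4a : (4:ℤ) * f.a ≠ 0 := by positivity
        exact mul_left_cancel₀ h4a this
      apply Subtype.ext; apply Subtype.ext
      exact BQF.ext' f g hab hbb hcc
    exact Finite.of_injective _ hinj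
  -- surjection R → ClassSet D
  have hsurj : Function.Surjective (fun g : R => Quot.mk (ClassRel D) g.1) := by
    intro q
    obtain ⟨f, rfl⟩ := Quot.exists_rep q
    obtain ⟨g, hgred, γ, hγ⟩ := exists_reduced hD f
    exact ⟨⟨g, hgred⟩, (Quot.sound ⟨γ, hγ⟩).symm⟩
  exact Finite.of_surjective _ hsurj
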